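/- arXiv:1502.03740 — 5 statements merged into one kernel-verified Lean document; each statement's English description precedes it below -/
import Mathlib

section
/- Let I ⊆ ℝ be an interval, f : I → ℝ a function, and A ⊆ I a set such that f is differentiable at every point of A. If f(A) is a Lebesgue null set, then the set {t ∈ A | f'(t) ≠ 0} is a Lebesgue null set. -/
/-!
Where `f' t ≠ 0`, the derivative gives a local reverse Lipschitz bound
`|x - t| ≤ n |f x - f t|` for `x ∈ A` within `1 / (n + 1)` of `t`. For a fixed `n`, any two
points of `A` satisfying it at distance `< 1 / (n + 1)` satisfy it with respect to each other, so
`f` is `n`-anti-Lipschitz on small pieces of this set. Anti-Lipschitz maps do not decrease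
Hausdorff measure, so each piece is null because `f '' A` is; countably many pieces suffice.
-/

open MeasureTheory Set Filter Topology
open scoped NNReal ENNReal

theorem le_hausdorffMeasure_image_of_antilipschitzWith_domRestrict {X Y : Type*}
    [EMetricSpace X] [MeasurableSpace X] [BorelSpace X]
    [EMetricSpace Y] [MeasurableSpace Y] [BorelSpace Y]
    {f : X → Y} {s : Set X} {K : ℝ≥0} (hf : AntilipschitzWith K (s.domRestrict f))
    {d : ℝ} (hd : 0 ≤ d) : μH[d] s ≤ (K : ℝ≥0∞) ^ d * μH[d] (f '' s) := by
  calc μH[d] s = μH[d] (univ : Set s) := by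
        rw [← (isometry_subtype_coe (s := s)).hausdorffMeasure_image (Or.inl hd), image_univ,
          Subtype.range_coe]
    _ ≤ (K : ℝ≥0∞) ^ d * μH[d] (s.domRestrict f '' univ) := hf.le_hausdorffMeasure_image hd _
    _ = (K : ℝ≥0∞) ^ d * μH[d] (f '' s) := by rw [image_univ, range_domRestrict]

theorem HasDerivWithinAt.exists_nat_dist_le_mul_dist {𝕜 F : Type*} [NontriviallyNormedField 𝕜]
    [NormedAddCommGroup F] [NormedSpace 𝕜 F] {f : 𝕜 → F} {f' : F} {s : Set 𝕜} {t : 𝕜}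
    (hf : HasDerivWithinAt f f' s t) (hf' : f' ≠ 0) :
    ∃ n : ℕ, ∀ x ∈ s, dist x t < (n + 1 : ℝ)⁻¹ → dist x t ≤ n * dist (f x) (f t) := by
  have hO : (· - t) =O[𝓝[s] t] (f · - f t) :=
    (HasDerivAtFilter.isTheta_sub hf hf').isBigO_symm.comp_tendsto
      (tendsto_id.prodMk tendsto_const_pure)
  obtain ⟨c, hc⟩ := hO.bound
  obtain ⟨δ, hδ, hball⟩ := Metric.mem_nhdsWithin_iff.mp hc
  obtain ⟨n, hn⟩ := exists_nat_gt (max c δ⁻¹)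
  refine ⟨n, fun x hx hxt => ?_⟩
  have hδn : (n + 1 : ℝ)⁻¹ < δ := by
    rw [inv_lt_comm₀ (by positivity) hδ]
    linarith [le_max_right c δ⁻¹]
  have hxc : ‖x - t‖ ≤ c * ‖f x - f t‖ := hball ⟨Metric.mem_ball.mpr (hxt.trans hδn), hx⟩
  rw [dist_eq_norm, dist_eq_norm]
  exact hxc.trans (by gcongr; linarith [le_max_left c δ⁻¹])

theorem hausdorffMeasure_setOf_dist_le_mul_dist_eq_zero {X Y : Type*}
    [MetricSpace X] [SecondCountableTopology X] [MeasurableSpace X] [BorelSpace X]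
    [MetricSpace Y] [MeasurableSpace Y] [BorelSpace Y]
    {f : X → Y} {A : Set X} {d : ℝ} (hd : 0 ≤ d) (hA : μH[d] (f '' A) = 0)
    (K : ℝ≥0) {r : ℝ} (hr : 0 < r) :
    μH[d] {t ∈ A | ∀ x ∈ A, dist x t < r → dist x t ≤ K * dist (f x) (f t)} = 0 := by
  set S := {t ∈ A | ∀ x ∈ A, dist x t < r → dist x t ≤ K * dist (f x) (f t)}
  refine measure_null_of_locally_null S fun t _ => ⟨S ∩ Metric.ball t (r / 2),
    inter_mem_nhdsWithin S (Metric.ball_mem_nhds t (half_pos hr)), ?_⟩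
  have hanti : AntilipschitzWith K ((S ∩ Metric.ball t (r / 2)).domRestrict f) := by
    refine AntilipschitzWith.of_le_mul_dist fun x y => ?_
    have hxy : dist (x : X) y < r := by
      linarith [dist_triangle_right (x : X) y t, Metric.mem_ball.mp x.2.2,
        Metric.mem_ball.mp y.2.2]
    exact y.2.1.2 x x.2.1.1 hxy
  refine le_antisymm ?_ zero_le
  calc μH[d] (S ∩ Metric.ball t (r / 2))
      ≤ (K : ℝ≥0∞) ^ d * μH[d] (f '' (S ∩ Metric.ball t (r / 2))) :=
        le_hausdorffMeasure_image_of_antilipschitzWith_domRestrict hanti hd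
    _ ≤ (K : ℝ≥0∞) ^ d * μH[d] (f '' A) := by
        gcongr
        exact fun x hx => hx.1.1
    _ = 0 := by rw [hA, mul_zero]

theorem stmt1_general (I : Set ℝ) (f : ℝ → ℝ) (A : Set ℝ) (hA : A ⊆ I)
    (f' : ℝ → ℝ) (hf : ∀ t ∈ A, HasDerivWithinAt f (f' t) I t)
    (h0 : volume (f '' A) = 0) :
    volume {t ∈ A | f' t ≠ 0} = 0 := by
  have hcover : {t ∈ A | f' t ≠ 0} ⊆ ⋃ n : ℕ,
      {t ∈ A | ∀ x ∈ A, dist x t < (n + 1 : ℝ)⁻¹ → dist x t ≤ (n : ℝ≥0) * dist (f x) (f t)} := by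
    rintro t ⟨htA, hne⟩
    obtain ⟨n, hn⟩ := (hf t htA).exists_nat_dist_le_mul_dist hne
    exact mem_iUnion.mpr ⟨n, htA, fun x hx hxt => by simpa using hn x (hA hx) hxt⟩
  rw [← hausdorffMeasure_real] at h0 ⊢
  exact measure_mono_null hcover <| measure_iUnion_null fun n =>
    hausdorffMeasure_setOf_dist_le_mul_dist_eq_zero zero_le_one h0 n (by positivity)

/-- Serrin–Varberg. If `f : I → ℝ` is differentiable at every point of
`A ⊆ I` and `f '' A` is a Lebesgue null set, then `{t ∈ A | f' t ≠ 0}` is a null set. -/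
theorem stmt1 (I : Set ℝ) (hI : I.OrdConnected) (f : ℝ → ℝ) (A : Set ℝ) (hA : A ⊆ I)
    (f' : ℝ → ℝ) (hf : ∀ t ∈ A, HasDerivWithinAt f (f' t) I t)
    (h0 : volume (f '' A) = 0) :
    volume {t ∈ A | f' t ≠ 0} = 0 :=
  stmt1_general I f A hA f' hf h0
end

section
/- Let I ⊆ ℝ be an interval, E a Banach space, and A : I → End(E) locally Bochner integrable. Then there exists a unique evolution operator for A in E, i.e., a unique function X : I × I → End(E) such that for each s ∈ I, X(·, s) is continuous with X(t, s) − X(u, s) = ∫_u^t A(λ) ∘ X(λ, s) dλ for all u, t ∈ I, and X(s, s) = id_E. -/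
open MeasureTheory Set intervalIntegral

/-- An evolution operator for `A` in `E` on the interval `I`: for each `s ∈ I`,
`X(·, s)` is a continuous operator solution of `X' = A ∘ X` with `X(s,s) = id`. -/
def IsEvolutionOperator {E : Type*} [NormedAddCommGroup E] [NormedSpace ℝ E]
    (I : Set ℝ) (A : ℝ → E →L[ℝ] E) (X : ℝ → ℝ → E →L[ℝ] E) : Prop :=
  ∀ s ∈ I, ContinuousOn (fun t => X t s) I ∧ X s s = ContinuousLinearMap.id ℝ E ∧
    ∀ u ∈ I, ∀ t ∈ I, X t s - X u s = ∫ τ in u..t, (A τ).comp (X τ s)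

/-!
The evolution operator is `X t s = Y t`, where `Y` solves the linear Volterra equation
`Y t = 1 + ∫ τ in s..t, A τ * Y τ`; this equation is solved in any complete normed ring.
On `[a, b]` with `∫ τ in a..b, ‖A τ‖ < 1` the Picard map is a contraction of `C([a, b], R)`
in the sup norm. The intermediate value theorem, applied to `x ↦ ∫ τ in a..x, ‖A τ‖`, cuts
any compact interval into finitely many such pieces; a solution on one piece is continued to the
next by restarting from its value at the common endpoint, and uniqueness propagates in the same
way. On an arbitrary interval `I`, uniqueness makes the solutions on compact subintervals
coherent, and together they define the solution on `I`.
-/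

open Filter Topology Function

theorem exists_Ici_mem_nhdsWithin {α : Type*} [TopologicalSpace α] [LinearOrder α]
    [OrderClosedTopology α] {I : Set α} {t : α} (ht : t ∈ I) :
    ∃ a ∈ I, a ≤ t ∧ Ici a ∈ 𝓝[I] t := by
  by_cases h : ∃ a ∈ I, a < t
  · obtain ⟨a, ha, hat⟩ := h
    exact ⟨a, ha, hat.le, mem_nhdsWithin_of_mem_nhds (Ici_mem_nhds hat)⟩
  · push Not at h
    exact ⟨t, ht, le_rfl, mem_of_superset self_mem_nhdsWithin h⟩

theorem exists_Iic_mem_nhdsWithin {α : Type*} [TopologicalSpace α] [LinearOrder α]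
    [OrderClosedTopology α] {I : Set α} {t : α} (ht : t ∈ I) :
    ∃ b ∈ I, t ≤ b ∧ Iic b ∈ 𝓝[I] t :=
  exists_Ici_mem_nhdsWithin (α := αᵒᵈ) ht

theorem continuousOn_of_forall_continuousOn_Icc {α β : Type*} [TopologicalSpace α]
    [LinearOrder α] [OrderClosedTopology α] [TopologicalSpace β] {I : Set α} {f : α → β}
    (h : ∀ a ∈ I, ∀ b ∈ I, ContinuousOn f (Icc a b)) : ContinuousOn f I := by
  intro t ht
  obtain ⟨a, ha, hat, hIci⟩ := exists_Ici_mem_nhdsWithin ht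
  obtain ⟨b, hb, htb, hIic⟩ := exists_Iic_mem_nhdsWithin ht
  refine (h a ha b hb t ⟨hat, htb⟩).mono_of_mem_nhdsWithin ?_
  rw [← Ici_inter_Iic]
  exact Filter.inter_mem hIci hIic

theorem IntervalIntegrable.of_mem_Icc {E : Type*} [NormedAddCommGroup E] {f : ℝ → E}
    {μ : Measure ℝ} {a b u t : ℝ} (hf : IntervalIntegrable f μ a b) (hu : u ∈ Icc a b)
    (ht : t ∈ Icc a b) : IntervalIntegrable f μ u t :=
  hf.mono_set (uIcc_subset_uIcc (Icc_subset_uIcc hu) (Icc_subset_uIcc ht))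

theorem induction_Icc_of_continuousOn {G : ℝ → ℝ} {a b δ : ℝ} (hab : a ≤ b)
    (hG : ContinuousOn G (Icc a b)) (hδ : 0 < δ) {P : ℝ → ℝ → Prop}
    (small : ∀ x y, a ≤ x → x ≤ y → y ≤ b → G y - G x ≤ δ → P x y)
    (concat : ∀ m y, a ≤ m → m ≤ y → y ≤ b → P a m → P m y → P a y) : P a b := by
  suffices key : ∀ n : ℕ, ∀ y ∈ Icc a b, G y - G a ≤ n * δ → P a y by
    obtain ⟨n, hn⟩ := exists_nat_ge ((G b - G a) / δ)
    exact key n b (right_mem_Icc.2 hab) ((div_le_iff₀ hδ).1 hn)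
  intro n
  induction n with
  | zero =>
    intro y hy hGy
    exact small a y le_rfl hy.1 hy.2 (by simp at hGy; linarith)
  | succ n ih =>
    intro y hy hGy
    by_cases hle : G y - G a ≤ n * δ
    · exact ih y hy hle
    push Not at hle
    have hn : (0 : ℝ) ≤ n * δ := by positivity
    obtain ⟨m, hm, hGm⟩ : ∃ m ∈ Icc a y, G m = G a + n * δ :=
      intermediate_value_Icc hy.1 (hG.mono (Icc_subset_Icc_right hy.2))
        ⟨by linarith, by linarith⟩
    refine concat m y hm.1 hm.2 hy.2 (ih m ⟨hm.1, hm.2.trans hy.2⟩ (by linarith)) ?_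
    exact small m y hm.1 hm.2 hy.2 (by push_cast at hGy; linarith)

theorem induction_Icc_of_intervalIntegrable {E : Type*} [NormedAddCommGroup E] {A : ℝ → E}
    {a b : ℝ} (hA : IntervalIntegrable A volume a b) (hab : a ≤ b) {P : ℝ → ℝ → Prop}
    (small : ∀ x y, a ≤ x → x ≤ y → y ≤ b → ∫ τ in x..y, ‖A τ‖ < 1 → P x y)
    (concat : ∀ m y, a ≤ m → m ≤ y → y ≤ b → P a m → P m y → P a y) : P a b := by
  have hG := continuousOn_primitive_interval' hA.norm (left_mem_uIcc (a := a) (b := b))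
  rw [uIcc_of_le hab] at hG
  refine induction_Icc_of_continuousOn hab hG one_half_pos (fun x y hx hxy hy hxy' => ?_) concat
  refine small x y hx hxy hy ?_
  rw [integral_interval_sub_left (hA.norm.of_mem_Icc (left_mem_Icc.2 hab) ⟨hx.trans hxy, hy⟩)
    (hA.norm.of_mem_Icc (left_mem_Icc.2 hab) ⟨hx, hxy.trans hy⟩)] at hxy'
  linarith

section LinearIntegralEquation

variable {R : Type*} [NormedRing R] [NormedSpace ℝ R]

def IsLinearSolOn (A : ℝ → R) (s : ℝ) (v : R) (S : Set ℝ) (Y : ℝ → R) : Prop :=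
  ContinuousOn Y S ∧ ∀ t ∈ S, Y t = v + ∫ τ in s..t, A τ * Y τ

variable {A Y Z W : ℝ → R} {s m a b : ℝ} {v w : R} {S T : Set ℝ}

namespace IsLinearSolOn

theorem apply_self (hY : IsLinearSolOn A s v S Y) (hs : s ∈ S) : Y s = v := by
  simpa using hY.2 s hs

theorem mono (hY : IsLinearSolOn A s v S Y) (hTS : T ⊆ S) : IsLinearSolOn A s v T Y :=
  ⟨hY.1.mono hTS, fun t ht => hY.2 t (hTS ht)⟩

theorem congr (hY : IsLinearSolOn A s v S Y) (hS : S.OrdConnected) (hs : s ∈ S)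
    (hWY : EqOn W Y S) : IsLinearSolOn A s v S W := by
  refine ⟨hY.1.congr hWY, fun t ht => ?_⟩
  rw [hWY ht, hY.2 t ht]
  congr 1
  exact integral_congr fun τ hτ => by rw [hWY (hS.uIcc_subset hs ht hτ)]

theorem sub_eq_integral (hY : IsLinearSolOn A s v S Y) (hS : S.OrdConnected)
    (hA : ∀ u ∈ S, ∀ t ∈ S, IntervalIntegrable A volume u t) (hs : s ∈ S) {u t : ℝ}
    (hu : u ∈ S) (ht : t ∈ S) : Y t - Y u = ∫ τ in u..t, A τ * Y τ := by
  have hAY : ∀ t ∈ S, IntervalIntegrable (fun τ => A τ * Y τ) volume s t := fun t ht =>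
    (hA s hs t ht).mul_continuousOn (hY.1.mono (hS.uIcc_subset hs ht))
  rw [hY.2 t ht, hY.2 u hu, add_sub_add_left_eq_sub,
    integral_interval_sub_left (hAY t ht) (hAY u hu)]

theorem rebase (hY : IsLinearSolOn A s v S Y) (hS : S.OrdConnected)
    (hA : ∀ u ∈ S, ∀ t ∈ S, IntervalIntegrable A volume u t) (hs : s ∈ S) (hm : m ∈ S) :
    IsLinearSolOn A m (Y m) S Y :=
  ⟨hY.1, fun _ ht => eq_add_of_sub_eq' (hY.sub_eq_integral hS hA hs hm ht)⟩

theorem exists_Icc_union (hY : IsLinearSolOn A m w (Icc a m) Y)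
    (hZ : IsLinearSolOn A m w (Icc m b) Z) (ham : a ≤ m) (hmb : m ≤ b) :
    ∃ W, IsLinearSolOn A m w (Icc a b) W ∧ EqOn W Y (Icc a m) ∧ EqOn W Z (Icc m b) := by
  have hma : m ∈ Icc a m := right_mem_Icc.2 ham
  have hmb' : m ∈ Icc m b := left_mem_Icc.2 hmb
  set W := fun t => if t ≤ m then Y t else Z t
  have hWY : EqOn W Y (Icc a m) := fun t ht => if_pos ht.2
  have hWZ : EqOn W Z (Icc m b) := fun t ht => by
    rcases ht.1.eq_or_lt with rfl | hlt
    · simp only [W, le_rfl, if_true, hY.apply_self hma, hZ.apply_self hmb']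
    · exact if_neg hlt.not_ge
  refine ⟨W, ⟨?_, fun t ht => ?_⟩, hWY, hWZ⟩
  · rw [← Icc_union_Icc_eq_Icc ham hmb]
    exact (hY.1.congr hWY).union_of_isClosed (hZ.1.congr hWZ) isClosed_Icc isClosed_Icc
  · rcases le_total t m with h | h
    · exact (hY.congr ordConnected_Icc hma hWY).2 t ⟨ht.1, h⟩
    · exact (hZ.congr ordConnected_Icc hmb' hWZ).2 t ⟨h, ht.2⟩

end IsLinearSolOn

theorem norm_integral_mul_le (hA : IntervalIntegrable A volume a b) {u t C : ℝ}
    (hu : u ∈ Icc a b) (ht : t ∈ Icc a b) (hC : ∀ τ ∈ Icc a b, ‖Y τ‖ ≤ C) :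
    ‖∫ τ in u..t, A τ * Y τ‖ ≤ (∫ τ in a..b, ‖A τ‖) * C := by
  have hab : a ≤ b := hu.1.trans hu.2
  have hC0 : 0 ≤ C := (norm_nonneg _).trans (hC u hu)
  have hsub : uIoc u t ⊆ Icc a b := uIoc_subset_uIcc.trans (uIcc_subset_Icc hu ht)
  calc ‖∫ τ in u..t, A τ * Y τ‖ ≤ |∫ τ in u..t, ‖A τ‖ * C| := by
        refine norm_integral_le_abs_of_norm_le (ae_restrict_of_forall_mem measurableSet_uIoc
          fun τ hτ => ?_) ((hA.of_mem_Icc hu ht).norm.mul_const C)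
        exact (norm_mul_le _ _).trans (mul_le_mul_of_nonneg_left (hC τ (hsub hτ)) (norm_nonneg _))
    _ = |∫ τ in u..t, ‖A τ‖| * C := by
        rw [intervalIntegral.integral_mul_const, abs_mul, abs_of_nonneg hC0]
    _ ≤ |∫ τ in a..b, ‖A τ‖| * C := by
        refine mul_le_mul_of_nonneg_right (abs_integral_mono_interval
          (uIoc_subset_uIoc_of_uIcc_subset_uIcc (uIcc_subset_uIcc (Icc_subset_uIcc hu)
            (Icc_subset_uIcc ht))) (ae_of_all _ fun τ => norm_nonneg _) hA.norm) hC0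
    _ = (∫ τ in a..b, ‖A τ‖) * C := by
        rw [abs_of_nonneg (integral_nonneg hab fun τ _ => norm_nonneg _)]

noncomputable def picard (hA : IntervalIntegrable A volume a b) (hs : s ∈ Icc a b) (v : R)
    (Y : C(Icc a b, R)) : C(Icc a b, R) where
  toFun t := v + ∫ τ in s..t, A τ * IccExtend (hs.1.trans hs.2) Y τ
  continuous_toFun := by
    have hab := hs.1.trans hs.2
    have h := continuousOn_primitive_interval' (hA.mul_continuousOn
      (Y.continuous.Icc_extend' (h := hab)).continuousOn) (Icc_subset_uIcc hs)
    rw [uIcc_of_le hab] at h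
    exact (continuousOn_const.add h).domRestrict

theorem picard_apply (hA : IntervalIntegrable A volume a b) (hs : s ∈ Icc a b) (v : R)
    (Y : C(Icc a b, R)) (t : Icc a b) :
    picard hA hs v Y t = v + ∫ τ in s..t, A τ * IccExtend (hs.1.trans hs.2) Y τ := rfl

theorem lipschitzWith_picard (hA : IntervalIntegrable A volume a b) (hs : s ∈ Icc a b)
    (v : R) : LipschitzWith (Real.toNNReal (∫ τ in a..b, ‖A τ‖)) (picard hA hs v) := by
  have hab := hs.1.trans hs.2
  have : CompactSpace (Icc a b) := isCompact_iff_compactSpace.mp isCompact_Icc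
  refine LipschitzWith.of_dist_le_mul fun Y Z => ?_
  have hK : 0 ≤ ∫ τ in a..b, ‖A τ‖ := integral_nonneg hab fun τ _ => norm_nonneg _
  rw [Real.coe_toNNReal _ hK]
  refine (ContinuousMap.dist_le (mul_nonneg hK dist_nonneg)).2 fun t => ?_
  have hint (X : C(Icc a b, R)) :
      IntervalIntegrable (fun τ => A τ * IccExtend hab X τ) volume s t :=
    (hA.of_mem_Icc hs t.2).mul_continuousOn (X.continuous.Icc_extend' (h := hab)).continuousOn
  rw [dist_eq_norm, picard_apply, picard_apply, add_sub_add_left_eq_sub,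
    ← integral_sub (hint Y) (hint Z)]
  simp_rw [← mul_sub]
  refine norm_integral_mul_le hA hs t.2 fun τ hτ => ?_
  rw [IccExtend_of_mem hab _ hτ, IccExtend_of_mem hab _ hτ, ← dist_eq_norm]
  exact ContinuousMap.dist_apply_le_dist _

theorem IsLinearSolOn.isFixedPt_picard (hY : IsLinearSolOn A s v (Icc a b) Y)
    (hA : IntervalIntegrable A volume a b) (hs : s ∈ Icc a b) :
    IsFixedPt (picard hA hs v) ⟨(Icc a b).domRestrict Y, hY.1.domRestrict⟩ := by
  ext t
  change _ = Y t
  rw [picard_apply, hY.2 t t.2]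
  congr 1
  refine integral_congr fun τ hτ => ?_
  rw [IccExtend_of_mem _ _ (uIcc_subset_Icc hs t.2 hτ)]
  rfl

theorem isLinearSolOn_of_isFixedPt_picard (hA : IntervalIntegrable A volume a b)
    (hs : s ∈ Icc a b) {Y : C(Icc a b, R)} (hY : IsFixedPt (picard hA hs v) Y) :
    IsLinearSolOn A s v (Icc a b) (IccExtend (hs.1.trans hs.2) Y) := by
  refine ⟨(Y.continuous.Icc_extend' (h := hs.1.trans hs.2)).continuousOn, fun t ht => ?_⟩
  rw [IccExtend_of_mem _ _ ht]
  conv_lhs => rw [← hY]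
  rfl

theorem contractingWith_picard (hA : IntervalIntegrable A volume a b) (hs : s ∈ Icc a b)
    (hK : ∫ τ in a..b, ‖A τ‖ < 1) (v : R) :
    ContractingWith (Real.toNNReal (∫ τ in a..b, ‖A τ‖)) (picard hA hs v) :=
  ⟨by rwa [Real.toNNReal_lt_one], lipschitzWith_picard hA hs v⟩

theorem IsLinearSolOn.eqOn_of_integral_norm_lt_one (hY : IsLinearSolOn A s v (Icc a b) Y)
    (hZ : IsLinearSolOn A s v (Icc a b) Z) (hA : IntervalIntegrable A volume a b)
    (hs : s ∈ Icc a b) (hK : ∫ τ in a..b, ‖A τ‖ < 1) : EqOn Y Z (Icc a b) := fun t ht =>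
  have : CompactSpace (Icc a b) := isCompact_iff_compactSpace.mp isCompact_Icc
  ContinuousMap.congr_fun ((contractingWith_picard hA hs hK v).fixedPoint_unique'
    (hY.isFixedPt_picard hA hs) (hZ.isFixedPt_picard hA hs)) ⟨t, ht⟩

def UniqueLinearSolIcc (A : ℝ → R) (a b : ℝ) : Prop :=
  ∀ s ∈ Icc a b, ∀ (v : R) (Y Z : ℝ → R), IsLinearSolOn A s v (Icc a b) Y →
    IsLinearSolOn A s v (Icc a b) Z → EqOn Y Z (Icc a b)

theorem UniqueLinearSolIcc.trans (h₁ : UniqueLinearSolIcc A a m)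
    (h₂ : UniqueLinearSolIcc A m b) (hA : IntervalIntegrable A volume a b) (ham : a ≤ m)
    (hmb : m ≤ b) : UniqueLinearSolIcc A a b := by
  intro s hs v Y Z hY hZ
  have hA' : ∀ u ∈ Icc a b, ∀ t ∈ Icc a b, IntervalIntegrable A volume u t :=
    fun u hu t ht => hA.of_mem_Icc hu ht
  have hm : m ∈ Icc a b := ⟨ham, hmb⟩
  have hsubl : Icc a m ⊆ Icc a b := Icc_subset_Icc_right hmb
  have hsubr : Icc m b ⊆ Icc a b := Icc_subset_Icc_left ham
  have hYZm : Y m = Z m := by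
    rcases le_total s m with h | h
    · exact h₁ s ⟨hs.1, h⟩ v Y Z (hY.mono hsubl) (hZ.mono hsubl) (right_mem_Icc.2 ham)
    · exact h₂ s ⟨h, hs.2⟩ v Y Z (hY.mono hsubr) (hZ.mono hsubr) (left_mem_Icc.2 hmb)
  have hYm := hY.rebase ordConnected_Icc hA' hs hm
  have hZm := hZ.rebase ordConnected_Icc hA' hs hm
  rw [← hYZm] at hZm
  rw [← Icc_union_Icc_eq_Icc ham hmb]
  exact (h₁ m (right_mem_Icc.2 ham) _ Y Z (hYm.mono hsubl) (hZm.mono hsubl)).union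
    (h₂ m (left_mem_Icc.2 hmb) _ Y Z (hYm.mono hsubr) (hZm.mono hsubr))

theorem uniqueLinearSolIcc (hA : IntervalIntegrable A volume a b) (hab : a ≤ b) :
    UniqueLinearSolIcc A a b :=
  induction_Icc_of_intervalIntegrable hA hab
    (fun _ _ hx hxy hy hK _ hs _ _ _ hY hZ =>
      hY.eqOn_of_integral_norm_lt_one hZ
        (hA.of_mem_Icc ⟨hx, hxy.trans hy⟩ ⟨hx.trans hxy, hy⟩) hs hK)
    (fun _ _ ham hmy hyb h₁ h₂ =>
      h₁.trans h₂ (hA.of_mem_Icc (left_mem_Icc.2 hab) ⟨ham.trans hmy, hyb⟩) ham hmy)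

theorem IsLinearSolOn.eqOn (hY : IsLinearSolOn A s v S Y) (hZ : IsLinearSolOn A s v S Z)
    (hS : S.OrdConnected) (hA : ∀ u ∈ S, ∀ t ∈ S, IntervalIntegrable A volume u t)
    (hs : s ∈ S) : EqOn Y Z S := fun t ht =>
  uniqueLinearSolIcc ((hA s hs t ht).mono_set (uIcc_of_le inf_le_sup).subset) inf_le_sup s
    left_mem_uIcc v Y Z (hY.mono (hS.uIcc_subset hs ht)) (hZ.mono (hS.uIcc_subset hs ht))
    right_mem_uIcc

theorem isLinearSolOn_of_forall_Icc (hs : s ∈ S)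
    (h : ∀ a ∈ S, ∀ b ∈ S, s ∈ Icc a b → IsLinearSolOn A s v (Icc a b) Y) :
    IsLinearSolOn A s v S Y := by
  refine ⟨continuousOn_of_forall_continuousOn_Icc fun a ha b hb => ?_, fun t ht => ?_⟩
  · exact (h (min a s) (min_rec' (· ∈ S) ha hs) (max b s) (max_rec' (· ∈ S) hb hs)
      ⟨min_le_right a s, le_max_right b s⟩).1.mono
      (Icc_subset_Icc (min_le_left a s) (le_max_left b s))
  · exact (h (min s t) (min_rec' (· ∈ S) hs ht) (max s t) (max_rec' (· ∈ S) hs ht)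
      left_mem_uIcc).2 t right_mem_uIcc

def ExistsLinearSolIcc (A : ℝ → R) (a b : ℝ) : Prop :=
  ∀ s ∈ Icc a b, ∀ v : R, ∃ Y, IsLinearSolOn A s v (Icc a b) Y

theorem ExistsLinearSolIcc.trans (h₁ : ExistsLinearSolIcc A a m)
    (h₂ : ExistsLinearSolIcc A m b) (hA : IntervalIntegrable A volume a b) (ham : a ≤ m)
    (hmb : m ≤ b) : ExistsLinearSolIcc A a b := by
  intro s hs v
  have hA' : ∀ u ∈ Icc a b, ∀ t ∈ Icc a b, IntervalIntegrable A volume u t :=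
    fun u hu t ht => hA.of_mem_Icc hu ht
  have hm : m ∈ Icc a b := ⟨ham, hmb⟩
  have hsubl : Icc a m ⊆ Icc a b := Icc_subset_Icc_right hmb
  have hsubr : Icc m b ⊆ Icc a b := Icc_subset_Icc_left ham
  rcases le_total s m with h | h
  · have hsl : s ∈ Icc a m := ⟨hs.1, h⟩
    obtain ⟨Y, hY⟩ := h₁ s hsl v
    obtain ⟨Z, hZ⟩ := h₂ m (left_mem_Icc.2 hmb) (Y m)
    obtain ⟨W, hW, hWY, -⟩ := (hY.rebase ordConnected_Icc
      (fun u hu t ht => hA' u (hsubl hu) t (hsubl ht)) hsl (right_mem_Icc.2 ham)).exists_Icc_union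
      hZ ham hmb
    refine ⟨W, ?_⟩
    simpa only [hWY hsl, hY.apply_self hsl] using hW.rebase ordConnected_Icc hA' hm hs
  · have hsr : s ∈ Icc m b := ⟨h, hs.2⟩
    obtain ⟨Z, hZ⟩ := h₂ s hsr v
    obtain ⟨Y, hY⟩ := h₁ m (right_mem_Icc.2 ham) (Z m)
    obtain ⟨W, hW, -, hWZ⟩ := hY.exists_Icc_union (hZ.rebase ordConnected_Icc
      (fun u hu t ht => hA' u (hsubr hu) t (hsubr ht)) hsr (left_mem_Icc.2 hmb)) ham hmb
    refine ⟨W, ?_⟩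
    simpa only [hWZ hsr, hZ.apply_self hsr] using hW.rebase ordConnected_Icc hA' hm hs

variable [CompleteSpace R]

theorem exists_isLinearSolOn_of_integral_norm_lt_one (hA : IntervalIntegrable A volume a b)
    (hs : s ∈ Icc a b) (hK : ∫ τ in a..b, ‖A τ‖ < 1) (v : R) :
    ∃ Y, IsLinearSolOn A s v (Icc a b) Y := by
  have : Nonempty (Icc a b) := ⟨⟨s, hs⟩⟩
  have : CompactSpace (Icc a b) := isCompact_iff_compactSpace.mp isCompact_Icc
  exact ⟨_, isLinearSolOn_of_isFixedPt_picard hA hs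
    (contractingWith_picard hA hs hK v).fixedPoint_isFixedPt⟩

theorem existsLinearSolIcc (hA : IntervalIntegrable A volume a b) (hab : a ≤ b) :
    ExistsLinearSolIcc A a b :=
  induction_Icc_of_intervalIntegrable hA hab
    (fun _ _ hx hxy hy hK _ hs v => exists_isLinearSolOn_of_integral_norm_lt_one
      (hA.of_mem_Icc ⟨hx, hxy.trans hy⟩ ⟨hx.trans hxy, hy⟩) hs hK v)
    (fun _ _ ham hmy hyb h₁ h₂ =>
      h₁.trans h₂ (hA.of_mem_Icc (left_mem_Icc.2 hab) ⟨ham.trans hmy, hyb⟩) ham hmy)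

theorem exists_isLinearSolOn (hS : S.OrdConnected)
    (hA : ∀ u ∈ S, ∀ t ∈ S, IntervalIntegrable A volume u t) (hs : s ∈ S) (v : R) :
    ∃ Y, IsLinearSolOn A s v S Y := by
  have hAs : ∀ t ∈ S, IntervalIntegrable A volume (s ⊓ t) (s ⊔ t) := fun t ht =>
    (hA s hs t ht).mono_set (uIcc_of_le inf_le_sup).subset
  choose! Z hZ using fun t (ht : t ∈ S) =>
    existsLinearSolIcc (hAs t ht) inf_le_sup s left_mem_uIcc v
  refine ⟨fun t => Z t t, isLinearSolOn_of_forall_Icc hs fun a ha b hb hsab => ?_⟩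
  obtain ⟨W, hW⟩ := existsLinearSolIcc (hA a ha b hb) (hsab.1.trans hsab.2) s hsab v
  refine hW.congr ordConnected_Icc hsab fun t ht => ?_
  have hsub : uIcc s t ⊆ Icc a b := uIcc_subset_Icc hsab ht
  exact uniqueLinearSolIcc (hAs t (hS.out ha hb ht)) inf_le_sup s left_mem_uIcc v _ _
    (hZ t (hS.out ha hb ht)) (hW.mono hsub) right_mem_uIcc

end LinearIntegralEquation

theorem IsEvolutionOperator.isLinearSolOn {E : Type*} [NormedAddCommGroup E]
    [NormedSpace ℝ E] {I : Set ℝ} {A : ℝ → E →L[ℝ] E}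
    {X : ℝ → ℝ → E →L[ℝ] E} (hX : IsEvolutionOperator I A X) {s : ℝ} (hs : s ∈ I) :
    IsLinearSolOn A s 1 I (fun t => X t s) := by
  obtain ⟨hcont, hid, hint⟩ := hX s hs
  refine ⟨hcont, fun t ht => ?_⟩
  have h := eq_add_of_sub_eq' (hint s hs t ht)
  rwa [hid] at h

/-- Existence and uniqueness of the evolution operator for a locally
Bochner integrable `A : I → End(E)`. -/
theorem stmt4 {E : Type*} [NormedAddCommGroup E] [NormedSpace ℝ E] [CompleteSpace E]
    (I : Set ℝ) (hI : I.OrdConnected) (A : ℝ → E →L[ℝ] E)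
    (hA : ∀ a ∈ I, ∀ b ∈ I, IntervalIntegrable A volume a b) :
    (∃ X, IsEvolutionOperator I A X) ∧
    ∀ X Y, IsEvolutionOperator I A X → IsEvolutionOperator I A Y →
      ∀ s ∈ I, ∀ t ∈ I, X t s = Y t s := by
  refine ⟨?_, fun X Y hX hY s hs t ht =>
    (hX.isLinearSolOn hs).eqOn (hY.isLinearSolOn hs) hI hA hs ht⟩
  choose! Y hY using fun s (hs : s ∈ I) => exists_isLinearSolOn hI hA hs (1 : E →L[ℝ] E)
  exact ⟨fun t s => Y s t, fun s hs => ⟨(hY s hs).1, (hY s hs).apply_self hs,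
    fun u hu t ht => (hY s hs).sub_eq_integral hI hA hs hu ht⟩⟩
end

section
/- Let I ⊆ ℝ be an interval, E a Banach space, A : I → End(E) locally Bochner integrable, and X : I × I → End(E) an evolution operator for A in E. Then for all s, t ∈ I, the operator X(t, s) is invertible with inverse X(s, t), and for all s, t, u ∈ I, X(u, t) ∘ X(t, s) = X(u, s). -/
open MeasureTheory Set intervalIntegral

open scoped Topology Interval

theorem eventually_integral_uIoc_norm_lt {E : Type*} [NormedAddCommGroup E] [NormedSpace ℝ E]
    {f : ℝ → E} {a b x ε : ℝ} (hf : IntervalIntegrable f volume a b) (hx : x ∈ uIcc a b)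
    (hε : 0 < ε) : ∀ᶠ c in 𝓝[uIcc a b] x, ∫ τ in Ι x c, ‖f τ‖ < ε := by
  have hprim : ContinuousWithinAt (fun c => ∫ τ in x..c, ‖f τ‖) (uIcc a b) x :=
    continuousOn_primitive_interval' hf.norm hx x hx
  rw [ContinuousWithinAt, integral_same] at hprim
  filter_upwards [hprim (Metric.ball_mem_nhds 0 hε)] with c hc
  rw [mem_preimage, Metric.mem_ball, Real.dist_0_eq_abs, abs_integral_eq_abs_integral_uIoc,
    abs_of_nonneg (integral_nonneg fun _ => norm_nonneg _)] at hc
  exact hc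

section NormedAlgebra

variable {R : Type*} [NormedRing R] [NormedAlgebra ℝ R] {A Y : ℝ → R}

theorem intervalIntegral.integral_mul_const_of_intervalIntegrable {f : ℝ → R} {a b : ℝ}
    (hf : IntervalIntegrable f volume a b) (c : R) :
    ∫ τ in a..b, f τ * c = (∫ τ in a..b, f τ) * c := by
  simp only [intervalIntegral, integral_mul_const_of_integrable hf.1,
    integral_mul_const_of_integrable hf.2, sub_mul]

/-- The maximum `M` of `‖Y‖` on the interval satisfies `M ≤ (∫ ‖A‖) M`. -/
theorem eqOn_zero_of_integral_uIoc_norm_lt_one {x c : ℝ} (hA : IntervalIntegrable A volume x c)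
    (hY : ContinuousOn Y (uIcc x c)) (hsmall : ∫ τ in Ι x c, ‖A τ‖ < 1)
    (hYeq : ∀ t ∈ uIcc x c, Y t = ∫ τ in x..t, A τ * Y τ) : ∀ t ∈ uIcc x c, Y t = 0 := by
  obtain ⟨m, hm, hmax⟩ := isCompact_uIcc.exists_isMaxOn nonempty_uIcc hY.norm
  set M := ‖Y m‖
  have hAM : IntegrableOn (fun τ => ‖A τ‖ * M) (Ι x c) := (hA.norm.mul_const M).def'
  have hbound : ∀ t ∈ uIcc x c, ‖Y t‖ ≤ (∫ τ in Ι x c, ‖A τ‖) * M := by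
    intro t ht
    have hsub : Ι x t ⊆ Ι x c :=
      uIoc_subset_uIoc_of_uIcc_subset_uIcc (uIcc_subset_uIcc left_mem_uIcc ht)
    calc ‖Y t‖ = ‖∫ τ in x..t, A τ * Y τ‖ := by rw [← hYeq t ht]
      _ ≤ ∫ τ in Ι x t, ‖A τ * Y τ‖ := norm_integral_le_integral_norm_uIoc
      _ ≤ ∫ τ in Ι x t, ‖A τ‖ * M := by
          refine integral_mono_of_nonneg (ae_of_all _ fun _ => norm_nonneg _) (hAM.mono_set hsub)
            (ae_restrict_of_forall_mem measurableSet_uIoc fun τ hτ => ?_)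
          exact (norm_mul_le _ _).trans (mul_le_mul_of_nonneg_left
            (hmax (uIoc_subset_uIcc (hsub hτ))) (norm_nonneg _))
      _ ≤ ∫ τ in Ι x c, ‖A τ‖ * M :=
          setIntegral_mono_set hAM (ae_of_all _ fun _ => by positivity) hsub.eventuallyLE
      _ = (∫ τ in Ι x c, ‖A τ‖) * M := integral_mul_const M _
  have hM : M ≤ 0 := by nlinarith [hbound m hm, norm_nonneg (Y m)]
  intro t ht
  exact norm_le_zero_iff.mp ((hmax ht).trans hM)

/-- The zero set of `Y` in the interval is closed by continuity and open by
`eqOn_zero_of_integral_uIoc_norm_lt_one`. -/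
theorem eq_zero_of_sub_eq_integral_mul {a b : ℝ} (hA : IntervalIntegrable A volume a b)
    (hY : ContinuousOn Y (uIcc a b))
    (hYeq : ∀ u ∈ uIcc a b, ∀ t ∈ uIcc a b, Y t - Y u = ∫ τ in u..t, A τ * Y τ)
    (ha : Y a = 0) : Y b = 0 := by
  refine isPreconnected_uIcc.induction₂' (fun x y => Y x = 0 → Y y = 0) (fun x hx => ?_)
    (fun _ _ _ _ _ _ hxy hyz h => hyz (hxy h)) left_mem_uIcc right_mem_uIcc ha
  by_cases hYx : Y x = 0
  · have hzero : ∀ᶠ c in 𝓝[uIcc a b] x, Y c = 0 := by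
      filter_upwards [eventually_integral_uIoc_norm_lt hA hx one_pos, self_mem_nhdsWithin]
        with c hsmall hc
      have hsub : uIcc x c ⊆ uIcc a b := uIcc_subset_uIcc hx hc
      refine eqOn_zero_of_integral_uIoc_norm_lt_one (hA.mono_set hsub) (hY.mono hsub) hsmall
        (fun t ht => ?_) c right_mem_uIcc
      simpa [hYx] using hYeq x hx t (hsub ht)
    filter_upwards [hzero] with c hc
    simp [hYx, hc]
  · filter_upwards [(hY x hx).eventually (eventually_ne_nhds hYx)] with c hc
    simp [hYx, hc]

end NormedAlgebra

theorem IsEvolutionOperator.mul_eq {E : Type*} [NormedAddCommGroup E] [NormedSpace ℝ E]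
    {I : Set ℝ} (hI : I.OrdConnected) {A : ℝ → E →L[ℝ] E}
    (hA : ∀ a ∈ I, ∀ b ∈ I, IntervalIntegrable A volume a b)
    {X : ℝ → ℝ → E →L[ℝ] E} (hX : IsEvolutionOperator I A X) {s t u : ℝ}
    (hs : s ∈ I) (ht : t ∈ I) (hu : u ∈ I) : X u t * X t s = X u s := by
  have hint : ∀ r ∈ I, ∀ v ∈ I, ∀ w ∈ I, IntervalIntegrable (fun τ => A τ * X τ r) volume v w :=
    fun r hr v hv w hw => (hA v hv w hw).mul_continuousOn ((hX r hr).1.mono (hI.uIcc_subset hv hw))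
  set Y : ℝ → E →L[ℝ] E := fun v => X v t * X t s - X v s
  have hYeq : ∀ v ∈ I, ∀ w ∈ I, Y w - Y v = ∫ τ in v..w, A τ * Y τ := by
    intro v hv w hw
    calc Y w - Y v = (X w t - X v t) * X t s - (X w s - X v s) := by simp only [Y, sub_mul]; abel
      _ = (∫ τ in v..w, A τ * X τ t) * X t s - ∫ τ in v..w, A τ * X τ s := by
          rw [(hX t ht).2.2 v hv w hw, (hX s hs).2.2 v hv w hw]; rfl
      _ = ∫ τ in v..w, A τ * Y τ := by
          rw [← integral_mul_const_of_intervalIntegrable (hint t ht v hv w hw),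
            ← integral_sub ((hint t ht v hv w hw).mul_const _) (hint s hs v hv w hw)]
          simp only [Y, mul_sub, mul_assoc]
  have hYt : Y t = 0 := by
    simp only [Y, (hX t ht).2.1, sub_eq_zero]
    exact one_mul _
  have hsub : uIcc t u ⊆ I := hI.uIcc_subset ht hu
  have hY : ContinuousOn Y I := ((hX t ht).1.mul continuousOn_const).sub (hX s hs).1
  exact sub_eq_zero.mp <| eq_zero_of_sub_eq_integral_mul (hA t ht u hu) (hY.mono hsub)
    (fun v hv w hw => hYeq v (hsub hv) w (hsub hw)) hYt

theorem stmt5_general {E : Type*} [NormedAddCommGroup E] [NormedSpace ℝ E]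
    (I : Set ℝ) (hI : I.OrdConnected) (A : ℝ → E →L[ℝ] E)
    (hA : ∀ a ∈ I, ∀ b ∈ I, IntervalIntegrable A volume a b)
    (X : ℝ → ℝ → E →L[ℝ] E) (hX : IsEvolutionOperator I A X) :
    (∀ s ∈ I, ∀ t ∈ I, (X t s).comp (X s t) = ContinuousLinearMap.id ℝ E ∧
      (X s t).comp (X t s) = ContinuousLinearMap.id ℝ E) ∧
    ∀ s ∈ I, ∀ t ∈ I, ∀ u ∈ I, (X u t).comp (X t s) = X u s := by
  refine ⟨fun s hs t ht => ⟨?_, ?_⟩, fun s hs t ht u hu => hX.mul_eq hI hA hs ht hu⟩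
  · exact (hX.mul_eq hI hA ht hs ht).trans (hX t ht).2.1
  · exact (hX.mul_eq hI hA hs ht hs).trans (hX s hs).2.1

/-- Every evolution operator consists of invertible operators, with
`X(t,s)⁻¹ = X(s,t)`, and satisfies the cocycle identity `X(u,t) X(t,s) = X(u,s)`. -/
theorem stmt5 {E : Type*} [NormedAddCommGroup E] [NormedSpace ℝ E] [CompleteSpace E]
    (I : Set ℝ) (hI : I.OrdConnected) (A : ℝ → E →L[ℝ] E)
    (hA : ∀ a ∈ I, ∀ b ∈ I, IntervalIntegrable A volume a b)
    (X : ℝ → ℝ → E →L[ℝ] E) (hX : IsEvolutionOperator I A X) :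
    (∀ s ∈ I, ∀ t ∈ I, (X t s).comp (X s t) = ContinuousLinearMap.id ℝ E ∧
      (X s t).comp (X t s) = ContinuousLinearMap.id ℝ E) ∧
    ∀ s ∈ I, ∀ t ∈ I, ∀ u ∈ I, (X u t).comp (X t s) = X u s :=
  stmt5_general I hI A hA X hX
end

section
/- Let I ⊆ ℝ be an interval, E a Banach space, A : I → End(E) locally Bochner integrable, and X an evolution operator for A in E. Then for all s, t ∈ I with s ≤ t, both ‖X(t, s)‖ ≤ exp(∫_s^t ‖A(λ)‖ dλ) and ‖X(t, s)⁻¹‖ ≤ exp(∫_s^t ‖A(λ)‖ dλ). -/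
/-!
Along `τ ↦ X(τ, s)` the evolution equation gives `‖X(τ,s)‖ ≤ 1 + ∫_s^τ ‖A‖ ‖X(·,s)‖`, and
Grönwall's inequality turns this into `‖X(t,s)‖ ≤ exp ∫_s^t ‖A‖`. The inverse `X(s,t)` is handled
in the same way after reversing time by `σ ↦ s + t - σ`. Since `A` is only integrable, Grönwall's
inequality rests on the identity `∫_s^u a · exp (∫_s^· a) = exp (∫_s^u a) - 1`, which is the
fundamental theorem of calculus for the absolutely continuous function `exp ∘ ∫_s^· a`.
-/

open MeasureTheory Set intervalIntegral

theorem LocallyLipschitz.comp_absolutelyContinuousOnInterval {F Y : Type*}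
    [SeminormedAddCommGroup F] [PseudoMetricSpace Y] {g : F → Y} {f : ℝ → F} {a b : ℝ}
    (hg : LocallyLipschitz g) (hf : AbsolutelyContinuousOnInterval f a b) :
    AbsolutelyContinuousOnInterval (g ∘ f) a b := by
  have hc : IsCompact (f '' uIcc a b) := isCompact_uIcc.image_of_continuousOn hf.continuousOn
  obtain ⟨K, hK⟩ := hg.locallyLipschitzOn.exists_lipschitzOnWith_of_compact hc
  have hKf := Filter.Tendsto.const_mul (K : ℝ) (show Filter.Tendsto _ _ (nhds 0) from hf)
  rw [mul_zero] at hKf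
  refine squeeze_zero'
    (Filter.Eventually.of_forall fun E ↦ Finset.sum_nonneg fun i _ ↦ dist_nonneg) ?_ hKf
  filter_upwards [Filter.mem_inf_of_right (Filter.mem_principal_self _)] with E hE
  rw [Finset.mul_sum]
  exact Finset.sum_le_sum fun i hi ↦ hK.dist_le_mul _ (mem_image_of_mem f (hE.1 i hi).1) _
    (mem_image_of_mem f (hE.1 i hi).2)

theorem integral_mul_exp_integral {a : ℝ → ℝ} {s u : ℝ} (ha : IntervalIntegrable a volume s u) :
    ∫ τ in s..u, a τ * Real.exp (∫ x in s..τ, a x) = Real.exp (∫ x in s..u, a x) - 1 := by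
  have hF := ha.absolutelyContinuousOnInterval_intervalIntegral (c := s) left_mem_uIcc
  have hexpF := Real.contDiff_exp.locallyLipschitz.comp_absolutelyContinuousOnInterval hF
  have hFTC := hexpF.integral_deriv_eq_sub
  simp only [Function.comp_apply, integral_same, Real.exp_zero] at hFTC
  rw [← hFTC]
  refine integral_congr_ae ?_
  filter_upwards [ha.ae_hasDerivAt_integral] with x hx hxu
  rw [Function.comp_def, ((hx (uIoc_subset_uIcc hxu) s left_mem_uIcc).exp).deriv, mul_comm]

theorem le_mul_exp_integral_of_le_add_integral {a g : ℝ → ℝ} {c s t : ℝ} (hst : s ≤ t)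
    (ha : IntervalIntegrable a volume s t) (ha0 : ∀ τ ∈ Icc s t, 0 ≤ a τ)
    (hg : ContinuousOn g (Icc s t))
    (hle : ∀ τ ∈ Icc s t, g τ ≤ c + ∫ x in s..τ, a x * g x) :
    g t ≤ c * Real.exp (∫ x in s..t, a x) := by
  set F : ℝ → ℝ := fun τ ↦ ∫ x in s..τ, a x
  have hF : ContinuousOn F (Icc s t) := by
    simpa only [uIcc_of_le hst] using
      (ha.absolutelyContinuousOnInterval_intervalIntegral left_mem_uIcc).continuousOn
  -- `M` is the best constant in `g ≤ M * exp F`; the hypothesis at a point where it is attained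
  -- gives `M ≤ c`.
  obtain ⟨t', ht', hmax⟩ := isCompact_Icc.exists_isMaxOn (nonempty_Icc.2 hst)
    (hg.div hF.rexp fun τ _ ↦ (Real.exp_pos (F τ)).ne')
  set M := g t' / Real.exp (F t')
  have hgM : ∀ τ ∈ Icc s t, g τ ≤ M * Real.exp (F τ) := fun τ hτ ↦
    (div_le_iff₀ (Real.exp_pos _)).1 (hmax hτ)
  have hsub : Icc s t' ⊆ Icc s t := Icc_subset_Icc_right ht'.2
  have ha' : IntervalIntegrable a volume s t' :=
    ha.mono_set (by simpa only [uIcc_of_le hst, uIcc_of_le ht'.1] using hsub)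
  have hM : M ≤ c := by
    have hint : ∫ x in s..t', a x * g x ≤ ∫ x in s..t', a x * (M * Real.exp (F x)) := by
      refine integral_mono_on ht'.1 (ha'.mul_continuousOn ?_) (ha'.mul_continuousOn ?_)
        fun x hx ↦ mul_le_mul_of_nonneg_left (hgM x (hsub hx)) (ha0 x (hsub hx))
      · simpa only [uIcc_of_le ht'.1] using hg.mono hsub
      · rw [uIcc_of_le ht'.1]
        exact (continuousOn_const.mul hF.rexp).mono hsub
    have hint' : ∫ x in s..t', a x * (M * Real.exp (F x)) = M * (Real.exp (F t') - 1) := by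
      simp only [mul_left_comm _ M, intervalIntegral.integral_const_mul]
      rw [integral_mul_exp_integral ha']
    have hgt' : g t' = M * Real.exp (F t') := (div_mul_cancel₀ _ (Real.exp_pos _).ne').symm
    linarith [hle t' ht']
  calc g t ≤ M * Real.exp (F t) := hgM t (right_mem_Icc.2 hst)
    _ ≤ c * Real.exp (F t) := mul_le_mul_of_nonneg_right hM (Real.exp_pos _).le

section LinearIntegralEquation

variable {𝔸 : Type*} [NormedRing 𝔸] [NormedSpace ℝ 𝔸] {A Y : ℝ → 𝔸} {s t : ℝ}

theorem norm_le_mul_exp_integral_norm_of_sub_eq_integral (hst : s ≤ t)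
    (hA : IntervalIntegrable A volume s t) (hY : ContinuousOn Y (Icc s t))
    (hAY : ∀ τ ∈ Icc s t, Y τ - Y s = ∫ x in s..τ, A x * Y x) :
    ‖Y t‖ ≤ ‖Y s‖ * Real.exp (∫ x in s..t, ‖A x‖) := by
  refine le_mul_exp_integral_of_le_add_integral hst hA.norm (fun _ _ ↦ norm_nonneg _) hY.norm
    fun τ hτ ↦ ?_
  have hsub : uIcc s τ ⊆ uIcc s t := by
    simpa only [uIcc_of_le hst, uIcc_of_le hτ.1] using Icc_subset_Icc_right hτ.2
  have hYτ : ContinuousOn Y (uIcc s τ) := hY.mono (by simpa only [uIcc_of_le hst] using hsub)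
  have hAτ := hA.mono_set hsub
  calc ‖Y τ‖ = ‖Y s + ∫ x in s..τ, A x * Y x‖ := by rw [← hAY τ hτ, add_sub_cancel]
    _ ≤ ‖Y s‖ + ∫ x in s..τ, ‖A x * Y x‖ := (norm_add_le _ _).trans
      (add_le_add_right (intervalIntegral.norm_integral_le_integral_norm hτ.1) _)
    _ ≤ ‖Y s‖ + ∫ x in s..τ, ‖A x‖ * ‖Y x‖ := by
      gcongr
      exact integral_mono_on hτ.1 (hAτ.mul_continuousOn hYτ).norm
        (hAτ.norm.mul_continuousOn hYτ.norm) fun x _ ↦ norm_mul_le _ _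

theorem norm_le_mul_exp_integral_norm_of_sub_eq_integral_backward (hst : s ≤ t)
    (hA : IntervalIntegrable A volume s t) (hY : ContinuousOn Y (Icc s t))
    (hAY : ∀ τ ∈ Icc s t, Y τ - Y t = ∫ x in t..τ, A x * Y x) :
    ‖Y s‖ ≤ ‖Y t‖ * Real.exp (∫ x in s..t, ‖A x‖) := by
  have hrefl : MapsTo (fun σ ↦ s + t - σ) (Icc s t) (Icc s t) := fun σ hσ ↦
    ⟨by linarith [hσ.2], by linarith [hσ.1]⟩
  have hforward := norm_le_mul_exp_integral_norm_of_sub_eq_integral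
    (A := fun σ ↦ -A (s + t - σ)) (Y := fun σ ↦ Y (s + t - σ)) hst
    (by simpa [Pi.neg_def] using (hA.comp_sub_left (s + t)).symm.neg)
    (hY.comp (continuousOn_const.sub continuousOn_id) hrefl) fun σ hσ ↦ ?_
  · simpa [intervalIntegral.integral_comp_sub_left fun x ↦ ‖A x‖] using hforward
  · simp only [add_sub_cancel_left, neg_mul, intervalIntegral.integral_neg]
    rw [intervalIntegral.integral_comp_sub_left (fun x ↦ A x * Y x), add_sub_cancel_left,
      integral_symm, neg_neg, hAY _ (hrefl hσ)]

end LinearIntegralEquation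

theorem stmt7_general {E : Type*} [NormedAddCommGroup E] [NormedSpace ℝ E]
    (I : Set ℝ) (hI : I.OrdConnected) (A : ℝ → E →L[ℝ] E)
    (hA : ∀ a ∈ I, ∀ b ∈ I, IntervalIntegrable A volume a b)
    (X : ℝ → ℝ → E →L[ℝ] E) (hX : IsEvolutionOperator I A X) :
    ∀ s ∈ I, ∀ t ∈ I, s ≤ t →
      ‖X t s‖ ≤ Real.exp (∫ τ in s..t, ‖A τ‖) ∧
      ‖X s t‖ ≤ Real.exp (∫ τ in s..t, ‖A τ‖) := by
  intro s hs t ht hst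
  have hIcc : Icc s t ⊆ I := hI.out hs ht
  obtain ⟨hXs, hXss, hXs_eq⟩ := hX s hs
  obtain ⟨hXt, hXtt, hXt_eq⟩ := hX t ht
  have hid : ‖ContinuousLinearMap.id ℝ E‖ * Real.exp (∫ τ in s..t, ‖A τ‖) ≤
      Real.exp (∫ τ in s..t, ‖A τ‖) :=
    mul_le_of_le_one_left (Real.exp_pos _).le ContinuousLinearMap.norm_id_le
  constructor
  · rw [← hXss] at hid
    exact (norm_le_mul_exp_integral_norm_of_sub_eq_integral hst (hA s hs t ht) (hXs.mono hIcc)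
      fun τ hτ ↦ hXs_eq s hs τ (hIcc hτ)).trans hid
  · rw [← hXtt] at hid
    exact (norm_le_mul_exp_integral_norm_of_sub_eq_integral_backward hst (hA s hs t ht)
      (hXt.mono hIcc) fun τ hτ ↦ hXt_eq t ht τ (hIcc hτ)).trans hid

/-- Standard estimate: `‖X(t,s)^{±1}‖ ≤ exp(∫_s^t ‖A‖)` for `s ≤ t`,
where `X(t,s)⁻¹ = X(s,t)`. -/
theorem stmt7 {E : Type*} [NormedAddCommGroup E] [NormedSpace ℝ E] [CompleteSpace E]
    (I : Set ℝ) (hI : I.OrdConnected) (A : ℝ → E →L[ℝ] E)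
    (hA : ∀ a ∈ I, ∀ b ∈ I, IntervalIntegrable A volume a b)
    (X : ℝ → ℝ → E →L[ℝ] E) (hX : IsEvolutionOperator I A X) :
    ∀ s ∈ I, ∀ t ∈ I, s ≤ t →
      ‖X t s‖ ≤ Real.exp (∫ τ in s..t, ‖A τ‖) ∧
      ‖X s t‖ ≤ Real.exp (∫ τ in s..t, ‖A τ‖) :=
  stmt7_general I hI A hA X hX
end

section
/- Let a ≤ b be real numbers, F a Banach space, g : [a, b] → F Bochner integrable, and G(t) = ∫_a^t g dλ. Then the total variation of G with respect to F equals ∫_{[a,b]} ‖g‖ dλ. -/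
/-!
Increments of `G` are dominated by those of `t ↦ ∫_a^t ‖g‖`, which gives `≤`. Conversely they are
dominated by those of the monotone variation function `V t = Var_{[a,t]} G`. By Lebesgue
differentiation `G' = g` almost everywhere, and `V` is differentiable almost everywhere, so
`‖g‖ ≤ V'` a.e.; since `∫_a^b V' ≤ V b - V a` for monotone `V`, this gives `≥`.
-/

open MeasureTheory Set Filter Topology

section PseudoMetric

variable {α E : Type*} [LinearOrder α] [PseudoMetricSpace E]

theorem eVariationOn_inter_Icc_le_of_dist_le_sub {f : α → E} {φ : α → ℝ} {s : Set α} {a b : α}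
    (as : a ∈ s) (bs : b ∈ s) (h : ∀ x ∈ s, ∀ y ∈ s, x ≤ y → dist (f x) (f y) ≤ φ y - φ x) :
    eVariationOn f (s ∩ Icc a b) ≤ ENNReal.ofReal (φ b - φ a) := by
  have hφ : MonotoneOn φ s := fun x hx y hy hxy =>
    sub_nonneg.1 (dist_nonneg.trans (h x hx y hy hxy))
  rw [← hφ.eVariationOn_eq as bs]
  refine iSup_mono fun p => Finset.sum_le_sum fun i _ => ?_
  obtain ⟨n, u, hu, us⟩ := p
  rw [edist_dist, edist_dist, dist_comm, Real.dist_eq]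
  exact ENNReal.ofReal_le_ofReal <|
    (h _ (us i).1 _ (us (i + 1)).1 (hu i.le_succ)).trans (le_abs_self _)

theorem LocallyBoundedVariationOn.dist_le_variationOnFromTo_sub {f : α → E} {s : Set α}
    (hf : LocallyBoundedVariationOn f s) {a x y : α} (as : a ∈ s) (xs : x ∈ s) (ys : y ∈ s)
    (hxy : x ≤ y) :
    dist (f x) (f y) ≤ variationOnFromTo f s a y - variationOnFromTo f s a x := by
  rw [variationOnFromTo.sub_right hf as ys xs, variationOnFromTo.eq_of_le f s hxy, dist_edist]
  exact ENNReal.toReal_mono (hf x y xs ys) <|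
    eVariationOn.edist_le f ⟨xs, le_rfl, hxy⟩ ⟨ys, hxy, le_rfl⟩

end PseudoMetric

section Normed

variable {E : Type*} [NormedAddCommGroup E] [NormedSpace ℝ E]

theorem norm_le_of_hasDerivWithinAt_Ioi {f : ℝ → E} {φ : ℝ → ℝ} {f' : E} {φ' x : ℝ}
    (hf : HasDerivWithinAt f f' (Ioi x) x) (hφ : HasDerivWithinAt φ φ' (Ioi x) x)
    (h : ∀ᶠ y in 𝓝[>] x, ‖f y - f x‖ ≤ φ y - φ x) : ‖f'‖ ≤ φ' := by
  have hf' := (hasDerivWithinAt_iff_tendsto_slope' self_notMem_Ioi).1 hf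
  have hφ' := (hasDerivWithinAt_iff_tendsto_slope' self_notMem_Ioi).1 hφ
  refine le_of_tendsto_of_tendsto hf'.norm hφ' ?_
  filter_upwards [h, self_mem_nhdsWithin] with y hy hxy
  have hxy : 0 < y - x := sub_pos.2 hxy
  rw [slope_def_module, slope_def_field, norm_smul, Real.norm_of_nonneg (inv_nonneg.2 hxy.le),
    div_eq_inv_mul]
  exact mul_le_mul_of_nonneg_left hy (inv_nonneg.2 hxy.le)

theorem integral_norm_deriv_le_of_dist_le_sub {f f' : ℝ → E} {φ : ℝ → ℝ} {a b : ℝ}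
    (hab : a ≤ b) (hf' : IntervalIntegrable f' volume a b)
    (hderiv : ∀ᵐ x, x ∈ Ioo a b → HasDerivAt f (f' x) x)
    (h : ∀ x ∈ Icc a b, ∀ y ∈ Icc a b, x ≤ y → dist (f x) (f y) ≤ φ y - φ x) :
    ∫ x in a..b, ‖f' x‖ ≤ φ b - φ a := by
  have hφ : MonotoneOn φ (Icc a b) := fun x hx y hy hxy =>
    sub_nonneg.1 (dist_nonneg.trans (h x hx y hy hxy))
  have hφ_uIcc : MonotoneOn φ (uIcc a b) := uIcc_of_le hab ▸ hφ
  have hle : ∀ᵐ x ∂volume.restrict (Icc a b), ‖f' x‖ ≤ deriv φ x := by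
    rw [← restrict_Ioo_eq_restrict_Icc, ae_restrict_iff' measurableSet_Ioo]
    filter_upwards [hderiv, hφ.ae_differentiableWithinAt_of_mem] with x hfx hφx hx
    have hφx : DifferentiableAt ℝ φ x :=
      (hφx (Ioo_subset_Icc_self hx)).differentiableAt (Icc_mem_nhds hx.1 hx.2)
    refine norm_le_of_hasDerivWithinAt_Ioi (hfx hx).hasDerivWithinAt
      hφx.hasDerivAt.hasDerivWithinAt ?_
    filter_upwards [Ioo_mem_nhdsGT hx.2] with y hy
    rw [← dist_eq_norm']
    exact h x (Ioo_subset_Icc_self hx) y ⟨hx.1.le.trans hy.1.le, hy.2.le⟩ hy.1.le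
  calc ∫ x in a..b, ‖f' x‖ ≤ ∫ x in a..b, deriv φ x :=
        intervalIntegral.integral_mono_ae_restrict hab hf'.norm
          hφ_uIcc.intervalIntegrable_deriv hle
    _ ≤ φ b - φ a := by
        have := hφ_uIcc.intervalIntegral_deriv_mem_uIcc
        rw [uIcc_of_le (sub_nonneg.2 (hφ (left_mem_Icc.2 hab) (right_mem_Icc.2 hab) hab))] at this
        exact this.2

theorem dist_le_intervalIntegral_norm_sub {g G : ℝ → E} {a b : ℝ}
    (hg : IntegrableOn g (Icc a b)) (hG : ∀ t ∈ Icc a b, G t = ∫ u in a..t, g u)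
    {x y : ℝ} (hx : x ∈ Icc a b) (hy : y ∈ Icc a b) (hxy : x ≤ y) :
    dist (G x) (G y) ≤ (∫ t in a..y, ‖g t‖) - ∫ t in a..x, ‖g t‖ := by
  have hint : ∀ {s t}, s ∈ Icc a b → t ∈ Icc a b → IntervalIntegrable g volume s t :=
    fun hs ht => (hg.mono_set (uIcc_subset_Icc hs ht)).intervalIntegrable
  have ha : a ∈ Icc a b := left_mem_Icc.2 (hx.1.trans hx.2)
  rw [dist_eq_norm', hG y hy, hG x hx,
    intervalIntegral.integral_interval_sub_left (hint ha hy) (hint ha hx),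
    intervalIntegral.integral_interval_sub_left (hint ha hy).norm (hint ha hx).norm]
  exact intervalIntegral.norm_integral_le_integral_norm hxy

variable [CompleteSpace E]

theorem ae_hasDerivAt_of_eqOn_intervalIntegral {g G : ℝ → E} {a b : ℝ}
    (hg : IntervalIntegrable g volume a b) (hab : a ≤ b)
    (hG : ∀ t ∈ Icc a b, G t = ∫ u in a..t, g u) :
    ∀ᵐ x, x ∈ Ioo a b → HasDerivAt G (g x) x := by
  filter_upwards [hg.ae_hasDerivAt_integral] with x hx hxab
  have hx_uIcc : x ∈ uIcc a b := uIcc_of_le hab ▸ Ioo_subset_Icc_self hxab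
  refine (hx hx_uIcc a left_mem_uIcc).congr_of_eventuallyEq ?_
  filter_upwards [Icc_mem_nhds hxab.1 hxab.2] with t ht using hG t ht

end Normed

/-- The total variation of an indefinite Bochner integral
`G(t) = ∫_a^t g dλ` equals `∫_{[a,b]} ‖g‖ dλ`. -/
theorem stmt14 {F : Type*} [NormedAddCommGroup F] [NormedSpace ℝ F] [CompleteSpace F]
    (a b : ℝ) (hab : a ≤ b) (g : ℝ → F) (hg : IntegrableOn g (Set.Icc a b))
    (G : ℝ → F) (hG : ∀ t ∈ Set.Icc a b, G t = ∫ u in a..t, g u) :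
    eVariationOn G (Set.Icc a b) = ENNReal.ofReal (∫ t in Set.Icc a b, ‖g t‖) := by
  have ha : a ∈ Icc a b := left_mem_Icc.2 hab
  have hb : b ∈ Icc a b := right_mem_Icc.2 hab
  have hI : ∫ t in Icc a b, ‖g t‖ = ∫ t in a..b, ‖g t‖ := by
    rw [intervalIntegral.integral_of_le hab, integral_Icc_eq_integral_Ioc]
  have hupper : eVariationOn G (Icc a b) ≤ ENNReal.ofReal (∫ t in Icc a b, ‖g t‖) := by
    have := eVariationOn_inter_Icc_le_of_dist_le_sub (f := G) (φ := fun t => ∫ u in a..t, ‖g u‖)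
      ha hb fun x hx y hy hxy => dist_le_intervalIntegral_norm_sub hg hG hx hy hxy
    rwa [inter_self, intervalIntegral.integral_same, sub_zero, ← hI] at this
  have hbv : LocallyBoundedVariationOn G (Icc a b) :=
    BoundedVariationOn.locallyBoundedVariationOn (ne_top_of_le_ne_top ENNReal.ofReal_ne_top hupper)
  have hg' : IntervalIntegrable g volume a b :=
    (intervalIntegrable_iff_integrableOn_Icc_of_le hab).2 hg
  have hlower : ∫ t in a..b, ‖g t‖ ≤
      variationOnFromTo G (Icc a b) a b - variationOnFromTo G (Icc a b) a a :=
    integral_norm_deriv_le_of_dist_le_sub hab hg'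
    (ae_hasDerivAt_of_eqOn_intervalIntegral hg' hab hG)
    fun x hx y hy hxy => hbv.dist_le_variationOnFromTo_sub ha hx hy hxy
  rw [variationOnFromTo.self, sub_zero, variationOnFromTo.eq_of_le _ _ hab, inter_self,
    ← hI] at hlower
  exact le_antisymm hupper (ENNReal.ofReal_le_of_le_toReal hlower)
end
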